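/- arXiv:2009.09860 — 3 statements merged into one kernel-verified Lean document; each statement's English description precedes it below -/
import Mathlib

section
/- Let v : ℝ → (0,∞) be measurable with v bounded below by a positive constant c and ∫ (v − ln v − 1) dx ≤ e₀. Then ∫ (ln v)² dx ≤ C, where C depends only on c and e₀. -/
/-! Writing `s = √v`, the inequality `log s ≤ s - 1` gives `(√v - 1)² ≤ v - ln v - 1`, while
`ln v ≤ 2 (√v - 1)` and, applied to `1 / v`, `-ln v ≤ 2 (1 - √v) / √v`. Since `v ≥ c`, this bounds
`(ln v)²` pointwise by `4 (1 + 1/c) (v - ln v - 1)`, and integrating gives `C = 4 (1 + 1/c) e₀`. -/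

open MeasureTheory

namespace Real

lemma log_le_two_mul_sqrt_sub_one {t : ℝ} (ht : 0 < t) : log t ≤ 2 * (√t - 1) := by
  have h := log_le_sub_one_of_pos (sqrt_pos.mpr ht)
  rw [log_sqrt ht.le] at h
  linarith

lemma neg_log_le_two_mul_one_sub_sqrt_div_sqrt {t : ℝ} (ht : 0 < t) :
    -log t ≤ 2 * (1 - √t) / √t := by
  have hs : 0 < √t := sqrt_pos.mpr ht
  have h := log_le_two_mul_sqrt_sub_one (inv_pos.mpr ht)
  rw [log_inv, sqrt_inv] at h
  calc -log t ≤ 2 * ((√t)⁻¹ - 1) := h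
    _ = 2 * (1 - √t) / √t := by field_simp

lemma sq_sqrt_sub_one_le_sub_log_sub_one {t : ℝ} (ht : 0 < t) :
    (√t - 1) ^ 2 ≤ t - log t - 1 := by
  have h := log_le_two_mul_sqrt_sub_one ht
  nlinarith [sq_sqrt ht.le]

lemma log_sq_le_mul_sq_sqrt_sub_one {c t : ℝ} (hc : 0 < c) (hct : c ≤ t) :
    log t ^ 2 ≤ 4 * (1 + 1 / c) * (√t - 1) ^ 2 := by
  have ht : 0 < t := hc.trans_le hct
  have hs : 0 < √t := sqrt_pos.mpr ht
  rcases le_or_gt 1 t with h1 | h1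
  · have hlog := log_le_two_mul_sqrt_sub_one ht
    have : log t ^ 2 ≤ 4 * (√t - 1) ^ 2 := by nlinarith [log_nonneg h1]
    nlinarith [sq_nonneg (√t - 1), one_div_pos.mpr hc]
  · have hlog := neg_log_le_two_mul_one_sub_sqrt_div_sqrt ht
    have hneg : 0 ≤ -log t := neg_nonneg.mpr (log_nonpos ht.le h1.le)
    calc log t ^ 2 = (-log t) ^ 2 := by ring
      _ ≤ (2 * (1 - √t) / √t) ^ 2 := pow_le_pow_left₀ hneg hlog 2
      _ = 4 * (√t - 1) ^ 2 / t := by rw [div_pow, sq_sqrt ht.le]; ring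
      _ ≤ 4 * (√t - 1) ^ 2 / c := by gcongr
      _ ≤ 4 * (1 + 1 / c) * (√t - 1) ^ 2 := by
        rw [div_eq_mul_one_div]
        nlinarith [sq_nonneg (√t - 1)]

lemma log_sq_le_mul_sub_log_sub_one {c t : ℝ} (hc : 0 < c) (hct : c ≤ t) :
    log t ^ 2 ≤ 4 * (1 + 1 / c) * (t - log t - 1) :=
  (log_sq_le_mul_sq_sqrt_sub_one hc hct).trans <| by
    gcongr
    exact sq_sqrt_sub_one_le_sub_log_sub_one (hc.trans_le hct)

end Real

lemma lintegral_ofReal_le_mul_of_le {α : Type*} [MeasurableSpace α] {μ : Measure α}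
    {f g : α → ℝ} {K : ℝ} (hK : 0 ≤ K) (hfg : ∀ x, f x ≤ K * g x) :
    ∫⁻ x, ENNReal.ofReal (f x) ∂μ ≤ ENNReal.ofReal K * ∫⁻ x, ENNReal.ofReal (g x) ∂μ := by
  rw [← lintegral_const_mul' _ _ ENNReal.ofReal_ne_top]
  refine lintegral_mono fun x => ?_
  rw [← ENNReal.ofReal_mul hK]
  exact ENNReal.ofReal_le_ofReal (hfg x)

/-- If `v ≥ c > 0` and `∫ (v − ln v − 1) dx ≤ e₀`, then `∫ (ln v)² dx ≤ C`
with `C` depending only on `c` and `e₀`. -/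
theorem log_v_square_integral_bound (c e₀ : ℝ) (hc : 0 < c) :
    ∃ C : ℝ, ∀ v : ℝ → ℝ, Measurable v → (∀ x, c ≤ v x) →
      (∫⁻ x, ENNReal.ofReal (v x - Real.log (v x) - 1) ≤ ENNReal.ofReal e₀) →
      ∫⁻ x, ENNReal.ofReal ((Real.log (v x))^2) ≤ ENNReal.ofReal C := by
  have hK : 0 ≤ 4 * (1 + 1 / c) := by positivity
  refine ⟨4 * (1 + 1 / c) * e₀, fun v _ hvc hint => ?_⟩
  calc ∫⁻ x, ENNReal.ofReal (Real.log (v x) ^ 2)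
      ≤ ENNReal.ofReal (4 * (1 + 1 / c)) * ∫⁻ x, ENNReal.ofReal (v x - Real.log (v x) - 1) :=
        lintegral_ofReal_le_mul_of_le hK fun x => Real.log_sq_le_mul_sub_log_sub_one hc (hvc x)
    _ ≤ ENNReal.ofReal (4 * (1 + 1 / c)) * ENNReal.ofReal e₀ := by gcongr
    _ = ENNReal.ofReal (4 * (1 + 1 / c) * e₀) := (ENNReal.ofReal_mul hK).symm
end

section
/- Let v : ℝ → (0,∞) be locally absolutely continuous with ∫_{v>2} v dx ≤ K and ∫ (v_x/v)² dx < ∞. Then for every x, (v(x) − 2)₊² ≤ C·K·(1 + sup v)·∫ (v_x/v)² dx for an absolute constant C; consequently sup_x v(x) ≤ C' (1 + ∫ ((ln v)_x)² dx) with C' depending only on K. -/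
/-!
If `v x > c`, let `s < x` be the last point before `x` with `v s ≤ c`; it exists because
`∫_{v > c} v < ∞` forces `{v > c}` to have finite measure. On `(s, x]` we have `v > c`, so
integrating Young's inequality `2 v' ≤ ε (v'/v)² + v² / ε` from `s` to `x` gives
`2 (v x - c) ≤ ε ∫ (v'/v)² + (sup v) K / ε`, and the optimal `ε` yields
`(v x - c)² ≤ K (sup v) ∫ (v'/v)²`. Taking the supremum over `x`,
`sup v - 2 ≤ √(K I sup v) ≤ (K I + sup v) / 2`, hence `sup v ≤ 4 + K I`.
-/

open MeasureTheory Set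

lemma MeasureTheory.IntegrableOn.measure_lt_top_of_le {α : Type*} [MeasurableSpace α]
    {μ : Measure α} {f : α → ℝ} {s : Set α} {c : ℝ} (hc : 0 < c) (hs : MeasurableSet s)
    (hf : IntegrableOn f s μ) (hcf : ∀ x ∈ s, c ≤ f x) : μ s < ⊤ := by
  have hconst : IntegrableOn (fun _ ↦ c) s μ :=
    hf.mono' aestronglyMeasurable_const <| ae_restrict_of_forall_mem hs fun x hx ↦ by
      rw [Real.norm_of_nonneg hc.le]; exact hcf x hx
  exact ((integrableOn_const_iff (C := c)).1 hconst).resolve_left (enorm_ne_zero.2 hc.ne')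

lemma ContinuousOn.exists_le_forall_Ioc_lt {f : ℝ → ℝ} {y x c : ℝ}
    (hf : ContinuousOn f (Icc y x)) (hyx : y ≤ x) (hfy : f y ≤ c) (hfx : c < f x) :
    ∃ s < x, f s ≤ c ∧ ∀ t ∈ Ioc s x, c < f t := by
  set T := Icc y x ∩ f ⁻¹' Iic c
  have hT : IsClosed T := hf.preimage_isClosed_of_isClosed isClosed_Icc isClosed_Iic
  have hTbdd : BddAbove T := ⟨x, fun t ht ↦ ht.1.2⟩
  have hsT : sSup T ∈ T := hT.csSup_mem ⟨y, ⟨le_rfl, hyx⟩, hfy⟩ hTbdd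
  refine ⟨sSup T, (hsT.1.2).lt_of_ne ?_, hsT.2, fun t ht ↦ ?_⟩
  · rintro hs; exact hfx.not_ge (hs ▸ hsT.2)
  · by_contra! hft
    exact ht.1.not_ge (le_csSup hTbdd ⟨⟨hsT.1.1.trans ht.1.le, ht.2⟩, hft⟩)

lemma two_mul_le_mul_div_sq_add_sq_div {d w ε : ℝ} (hw : w ≠ 0) (hε : 0 < ε) :
    2 * d ≤ ε * (d / w) ^ 2 + w ^ 2 / ε := by
  have hd : d = d / w * w := (div_mul_cancel₀ d hw).symm
  have hsq : ε * (d / w) ^ 2 + w ^ 2 / ε - 2 * (d / w * w) = (ε * (d / w) - w) ^ 2 / ε := by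
    field_simp
    ring
  have : 0 ≤ (ε * (d / w) - w) ^ 2 / ε := by positivity
  linarith

lemma two_mul_sub_le_integral {v v' : ℝ → ℝ} {s x ε : ℝ} (hsx : s ≤ x)
    (hcont : ContinuousOn v (Icc s x)) (hd : ∀ t ∈ Ioo s x, HasDerivAt v (v' t) t)
    (hv : ∀ t ∈ Ioo s x, v t ≠ 0) (hq : IntegrableOn (fun t ↦ (v' t / v t) ^ 2) (Icc s x))
    (hε : 0 < ε) :
    2 * (v x - v s) ≤ ε * (∫ t in s..x, (v' t / v t) ^ 2) + (∫ t in s..x, v t ^ 2) / ε := by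
  have hv2 : IntegrableOn (fun t ↦ v t ^ 2) (Icc s x) := (hcont.pow 2).integrableOn_Icc
  -- The one-sided FTC inequality needs no integrability of `v'`.
  have hftc := intervalIntegral.sub_le_integral_of_hasDeriv_right_of_le (g := fun t ↦ 2 * v t)
    (φ := fun t ↦ ε * (v' t / v t) ^ 2 + v t ^ 2 / ε) hsx (continuousOn_const.mul hcont)
    (fun t ht ↦ ((hd t ht).const_mul 2).hasDerivWithinAt)
    (by exact (hq.const_mul ε).add (hv2.div_const ε))
    (fun t ht ↦ two_mul_le_mul_div_sq_add_sq_div (hv t ht) hε)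
  have hqi : IntervalIntegrable (fun t ↦ (v' t / v t) ^ 2) volume s x :=
    (intervalIntegrable_iff_integrableOn_Icc_of_le hsx).2 hq
  have hv2i : IntervalIntegrable (fun t ↦ v t ^ 2) volume s x :=
    (intervalIntegrable_iff_integrableOn_Icc_of_le hsx).2 hv2
  rw [intervalIntegral.integral_add (hqi.const_mul ε) (hv2i.div_const ε),
    intervalIntegral.integral_const_mul, intervalIntegral.integral_div] at hftc
  linarith

lemma sq_le_mul_of_forall_two_mul_le {a b c : ℝ} (ha : 0 < a) (hc : 0 < c)
    (h : ∀ ε > 0, 2 * a ≤ ε * b + c / ε) : a ^ 2 ≤ b * c := by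
  have h' := h (c / a) (by positivity)
  rw [div_div_cancel₀ hc.ne'] at h'
  have : a ≤ c / a * b := by linarith
  rw [div_mul_eq_mul_div, le_div_iff₀ ha] at this
  nlinarith

lemma le_add_of_sub_le_sqrt_mul {S c t : ℝ} (hc : 0 ≤ c) (ht : 0 ≤ t) (hS : 0 ≤ S)
    (h : S - c ≤ √(t * S)) : S ≤ 2 * c + t := by
  nlinarith [Real.sq_sqrt (mul_nonneg ht hS), Real.sqrt_nonneg (t * S)]

lemma sq_sub_le_mul_iSup_mul_integral {v v' : ℝ → ℝ} {c K x : ℝ} (hc : 0 < c) (hK : 0 < K)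
    (hd : ∀ t, HasDerivAt v (v' t) t) (hb : BddAbove (range v))
    (hint : IntegrableOn v {t | c < v t}) (hKle : ∫ t in {t | c < v t}, v t ≤ K)
    (hq : Integrable fun t ↦ (v' t / v t) ^ 2) (hx : c < v x) :
    (v x - c) ^ 2 ≤ K * (⨆ t, v t) * ∫ t, (v' t / v t) ^ 2 := by
  have hcont : Continuous v := continuous_iff_continuousAt.2 fun t ↦ (hd t).continuousAt
  have hA : MeasurableSet {t | c < v t} := measurableSet_lt measurable_const hcont.measurable
  obtain ⟨y, hyx, hy⟩ : ∃ y ≤ x, v y ≤ c := by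
    by_contra! h
    have hfin := hint.measure_lt_top_of_le hc hA fun t ht ↦ ht.le
    exact ((measure_mono fun t ht ↦ h t ht).trans_lt hfin).ne Real.volume_Iic
  obtain ⟨s, hsx, hs, hsA⟩ := hcont.continuousOn.exists_le_forall_Ioc_lt hyx hy hx
  set S := ⨆ t, v t
  have hvS : ∀ t, v t ≤ S := le_ciSup hb
  have hS : 0 < S := (hc.trans hx).trans_le (hvS x)
  have hq_le : ∫ t in s..x, (v' t / v t) ^ 2 ≤ ∫ t, (v' t / v t) ^ 2 := by
    rw [intervalIntegral.integral_of_le hsx.le]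
    exact setIntegral_le_integral hq (ae_of_all _ fun t ↦ sq_nonneg _)
  have hv2_le : ∫ t in s..x, v t ^ 2 ≤ S * K := by
    rw [intervalIntegral.integral_of_le hsx.le]
    calc ∫ t in Ioc s x, v t ^ 2 ≤ ∫ t in Ioc s x, S * v t :=
          setIntegral_mono_on (hcont.pow 2).integrableOn_Ioc
            (hcont.integrableOn_Ioc.const_mul S) measurableSet_Ioc fun t ht ↦ by
            nlinarith [hsA t ht, hvS t]
      _ = S * ∫ t in Ioc s x, v t := integral_const_mul _ _
      _ ≤ S * ∫ t in {t | c < v t}, v t := by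
          refine mul_le_mul_of_nonneg_left (setIntegral_mono_set hint ?_ ?_) hS.le
          · exact ae_restrict_of_forall_mem hA fun t ht ↦ (hc.trans ht).le
          · exact Filter.Eventually.of_forall hsA
      _ ≤ S * K := mul_le_mul_of_nonneg_left hKle hS.le
  refine (sq_le_mul_of_forall_two_mul_le (b := ∫ t, (v' t / v t) ^ 2) (sub_pos.2 hx)
    (mul_pos hS hK) fun ε hε ↦ ?_).trans_eq (by ring)
  calc 2 * (v x - c) ≤ 2 * (v x - v s) := by linarith
    _ ≤ ε * (∫ t in s..x, (v' t / v t) ^ 2) + (∫ t in s..x, v t ^ 2) / ε :=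
        two_mul_sub_le_integral hsx.le hcont.continuousOn (fun t _ ↦ hd t)
          (fun t ht ↦ (hc.trans (hsA t (Ioo_subset_Ioc_self ht))).ne') hq.integrableOn hε
    _ ≤ ε * (∫ t, (v' t / v t) ^ 2) + S * K / ε := by gcongr

/-- If `v > 0` is differentiable with `∫_{v>2} v ≤ K` and `(v_x/v) ∈ L²`, then
`(v(x) − 2)₊² ≤ C·K·(1 + sup v)·∫ (v_x/v)²` for an absolute constant `C`, and
consequently `sup v ≤ C' (1 + ∫ ((ln v)_x)²)` with `C'` depending only on `K`. -/
theorem sup_v_bound :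
    ∃ C : ℝ, 0 < C ∧ ∀ K : ℝ, 0 < K → ∃ C' : ℝ, 0 < C' ∧
      ∀ (v v' : ℝ → ℝ), (∀ x, 0 < v x) → (∀ x, HasDerivAt v (v' x) x) →
        BddAbove (Set.range v) →
        IntegrableOn v {x : ℝ | 2 < v x} volume →
        (∫ x in {x : ℝ | 2 < v x}, v x) ≤ K →
        Integrable (fun x => (v' x / v x)^2) volume →
        (∀ x : ℝ, (max (v x - 2) 0)^2
            ≤ C * K * (1 + ⨆ y, v y) * ∫ x, (v' x / v x)^2) ∧
        (⨆ y, v y) ≤ C' * (1 + ∫ x, (v' x / v x)^2) := by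
  refine ⟨1, one_pos, fun K hK ↦ ⟨4 + K, by positivity, fun v v' hv hd hb hint hKle hq ↦ ?_⟩⟩
  set S := ⨆ y, v y
  set I := ∫ x, (v' x / v x) ^ 2
  have hI : 0 ≤ I := by positivity
  have hS : 0 ≤ S := (hv 0).le.trans (le_ciSup hb 0)
  have hpt : ∀ x, (max (v x - 2) 0) ^ 2 ≤ K * S * I := fun x ↦ by
    rcases le_or_gt (v x) 2 with hx | hx
    · rw [max_eq_right (by linarith), zero_pow two_ne_zero]
      positivity
    · rw [max_eq_left (by linarith)]
      exact sq_sub_le_mul_iSup_mul_integral two_pos hK hd hb hint hKle hq hx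
  refine ⟨fun x ↦ (hpt x).trans ?_, ?_⟩
  · rw [one_mul]
    gcongr
    linarith
  · have hS_le : S ≤ 2 + √(K * I * S) := ciSup_le fun x ↦ by
      have := Real.abs_le_sqrt (hpt x)
      rw [mul_right_comm] at this
      linarith [le_max_left (v x - 2) 0, le_abs_self (max (v x - 2) 0)]
    have := le_add_of_sub_le_sqrt_mul zero_le_two (by positivity : 0 ≤ K * I) hS (by linarith)
    nlinarith
end

section
/- Suppose y : [0,T] → [0,∞) is continuous, V : [0,T] → [0,∞) is integrable with ∫_0^T V(t) dt ≤ A, and y(t) ≤ C (2 + ∫_0^t V(s) y(s) ds) · ln(2 + ∫_0^t V(s) y(s) ds) for all t ∈ [0,T]. Then y is bounded on [0,T] by a constant depending only on C, A, T. -/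
/-!
Put `z t = c + ∫ₐᵗ V y` and `W t = ∫ₐᵗ V`. Since `z log z` is nondecreasing, the
hypothesis integrates to the increment bound `z t - z x ≤ C (W t - W x) z t log z t` for
`x ≤ t`, the integral form of `(log log z)' ≤ C V`. As `z` is merely absolutely continuous,
we do not differentiate; a continuous induction shows instead `log z t ≤ log c · exp (4 C W t)`.
Just to the right of a point `x` where this holds, `z t ≤ 2 z x` by continuity, and then the
increment bound carries the estimate from `x` to `t`; the factor `4` absorbs the losses of that
crude step. Finally `y ≤ C z log z` is bounded in terms of `C` and `∫ V ≤ A` alone.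
-/

open MeasureTheory intervalIntegral Set Filter Topology Real

section Primitive

variable {f : ℝ → ℝ} {a b x t : ℝ}

lemma IntervalIntegrable.of_mem_Icc (hf : IntervalIntegrable f volume a b) (hx : x ∈ Icc a b)
    (ht : t ∈ Icc a b) : IntervalIntegrable f volume x t :=
  hf.mono_set (uIcc_subset_uIcc (Icc_subset_uIcc hx) (Icc_subset_uIcc ht))

lemma integral_sub_integral_of_mem_Icc (hf : IntervalIntegrable f volume a b) (hx : x ∈ Icc a b)
    (ht : t ∈ Icc a b) : (∫ s in a..t, f s) - ∫ s in a..x, f s = ∫ s in x..t, f s :=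
  integral_interval_sub_left (hf.of_mem_Icc (left_mem_Icc.2 (hx.1.trans hx.2)) ht)
    (hf.of_mem_Icc (left_mem_Icc.2 (hx.1.trans hx.2)) hx)

lemma continuousOn_primitive_Icc (hf : IntervalIntegrable f volume a b) :
    ContinuousOn (fun t => ∫ s in a..t, f s) (Icc a b) :=
  (continuousOn_primitive_interval' hf left_mem_uIcc).mono Icc_subset_uIcc

lemma monotoneOn_primitive_of_nonneg (hf : IntervalIntegrable f volume a b)
    (hf0 : ∀ s ∈ Icc a b, 0 ≤ f s) : MonotoneOn (fun t => ∫ s in a..t, f s) (Icc a b) := by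
  intro x hx t ht hxt
  have : 0 ≤ ∫ s in x..t, f s :=
    integral_nonneg hxt fun s hs => hf0 s ⟨hx.1.trans hs.1, hs.2.trans ht.2⟩
  linarith [integral_sub_integral_of_mem_Icc hf hx ht]

end Primitive

lemma integral_mul_le_integral_mul_of_le {V y : ℝ → ℝ} {x t K : ℝ} (hxt : x ≤ t)
    (hV : IntervalIntegrable V volume x t)
    (hVy : IntervalIntegrable (fun s => V s * y s) volume x t)
    (hV0 : ∀ s ∈ Icc x t, 0 ≤ V s) (hy : ∀ s ∈ Icc x t, y s ≤ K) :
    ∫ s in x..t, V s * y s ≤ (∫ s in x..t, V s) * K := by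
  rw [← intervalIntegral.integral_mul_const]
  exact integral_mono_on hxt hVy (hV.mul_const K) fun s hs =>
    mul_le_mul_of_nonneg_left (hy s hs) (hV0 s hs)

lemma mul_log_le_mul_log {u v : ℝ} (hu : 1 ≤ u) (huv : u ≤ v) : u * log u ≤ v * log v :=
  mul_le_mul huv (log_le_log (by linarith) huv) (log_nonneg hu) (by linarith)

lemma log_le_mul_exp_of_le_add_mul_mul_log {u v c q : ℝ} (hc : 0 ≤ c) (hq : log 2 ≤ q)
    (hvq : v ≤ exp q) (hu1 : 1 ≤ u) (huv : u ≤ 2 * v) (hu : u ≤ v + c * (u * log u)) :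
    log u ≤ q * exp (4 * c) := by
  have hq0 : 0 ≤ q := (log_pos one_lt_two).le.trans hq
  have hu2 : u ≤ 2 * exp q := by linarith
  have hlogu : log u ≤ 2 * q := by
    calc log u ≤ log (2 * exp q) := log_le_log (by linarith) hu2
      _ = log 2 + q := by rw [log_mul two_ne_zero (exp_pos q).ne', log_exp]
      _ ≤ 2 * q := by linarith
  rw [log_le_iff_le_exp (by linarith)]
  calc u ≤ v + c * (u * log u) := hu
    _ ≤ exp q + c * (2 * exp q * (2 * q)) := by
        gcongr
        exact log_nonneg hu1
    _ = exp q * (4 * c * q + 1) := by ring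
    _ ≤ exp q * exp (4 * c * q) := by gcongr; exact add_one_le_exp _
    _ = exp (q * (4 * c + 1)) := by rw [← exp_add]; ring_nf
    _ ≤ exp (q * exp (4 * c)) := by gcongr; exact add_one_le_exp _

theorem log_le_mul_exp_of_forall_le_add_mul_mul_log {z W : ℝ → ℝ} {a b C p : ℝ}
    (hC : 0 ≤ C) (hp : log 2 ≤ p) (hz : ContinuousOn z (Icc a b))
    (hW : ContinuousOn W (Icc a b)) (hWmono : MonotoneOn W (Icc a b))
    (hz1 : ∀ t ∈ Icc a b, 1 ≤ z t) (hza : log (z a) ≤ p)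
    (hstep : ∀ x ∈ Icc a b, ∀ t ∈ Icc a b, x ≤ t →
      z t ≤ z x + C * (W t - W x) * (z t * log (z t))) :
    ∀ t ∈ Icc a b, log (z t) ≤ p * exp (4 * C * (W t - W a)) := by
  set ψ := fun t => p * exp (4 * C * (W t - W a))
  suffices Icc a b ⊆ {t | log (z t) ≤ ψ t} from this
  refine IsClosed.Icc_subset_of_forall_mem_nhdsWithin ?_ (by simpa [ψ] using hza) ?_
  · rw [inter_comm]
    exact isClosed_Icc.isClosed_le (hz.log fun t ht => by linarith [hz1 t ht]) (by fun_prop)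
  rintro x ⟨hxψ, hx⟩
  have hxI := Ico_subset_Icc_self hx
  have hzx : z x ≤ exp (ψ x) := by
    rw [← log_le_iff_le_exp (by linarith [hz1 x hxI])]
    exact hxψ
  have hψx : log 2 ≤ ψ x := by
    have hWx : W a ≤ W x := hWmono (left_mem_Icc.2 (hx.1.trans hx.2.le)) hxI hx.1
    have : 1 ≤ exp (4 * C * (W x - W a)) := one_le_exp (by nlinarith)
    exact hp.trans (le_mul_of_one_le_right ((log_pos one_lt_two).le.trans hp) this)
  have hnear : ∀ᶠ t in 𝓝[Ioc x b] x, t ∈ Ioc x b ∧ z t < 2 * z x :=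
    eventually_mem_nhdsWithin.and <|
      nhdsWithin_mono _ (Ioc_subset_Icc_self.trans (Icc_subset_Icc_left hx.1))
        ((hz x hxI).eventually_lt_const (by linarith [hz1 x hxI]))
  rw [← nhdsWithin_Ioc_eq_nhdsGT hx.2]
  filter_upwards [hnear] with t ⟨htx, hzt⟩
  have htI : t ∈ Icc a b := ⟨hx.1.trans htx.1.le, htx.2⟩
  calc log (z t) ≤ ψ x * exp (4 * (C * (W t - W x))) :=
        log_le_mul_exp_of_le_add_mul_mul_log
          (mul_nonneg hC (sub_nonneg.2 (hWmono hxI htI htx.1.le))) hψx hzx (hz1 t htI) hzt.le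
          (by simpa only [mul_assoc] using hstep x hxI t htI htx.1.le)
    _ = ψ t := by simp only [ψ, mul_assoc, ← exp_add]; ring_nf

theorem log_add_primitive_le_log_mul_exp {y V : ℝ → ℝ} {a b c C : ℝ} (hc : 2 ≤ c)
    (hC : 0 ≤ C) (hy0 : ∀ t ∈ Icc a b, 0 ≤ y t) (hV0 : ∀ t ∈ Icc a b, 0 ≤ V t)
    (hV : IntervalIntegrable V volume a b)
    (hVy : IntervalIntegrable (fun s => V s * y s) volume a b)
    (hy : ∀ t ∈ Icc a b,
      y t ≤ C * (c + ∫ s in a..t, V s * y s) * log (c + ∫ s in a..t, V s * y s)) :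
    ∀ t ∈ Icc a b,
      log (c + ∫ s in a..t, V s * y s) ≤ log c * exp (4 * C * ∫ s in a..t, V s) := by
  set z := fun t => c + ∫ s in a..t, V s * y s
  set W := fun t => ∫ s in a..t, V s
  have hzmono : MonotoneOn z (Icc a b) :=
    (monotoneOn_primitive_of_nonneg hVy fun s hs => mul_nonneg (hV0 s hs) (hy0 s hs)).const_add c
  have hz1 : ∀ t ∈ Icc a b, 1 ≤ z t := fun t ht => by
    have : c ≤ z t := by simpa [z] using hzmono (left_mem_Icc.2 (ht.1.trans ht.2)) ht ht.1
    linarith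
  have hstep : ∀ x ∈ Icc a b, ∀ t ∈ Icc a b, x ≤ t →
      z t ≤ z x + C * (W t - W x) * (z t * log (z t)) := by
    intro x hx t ht hxt
    have hy' : ∀ s ∈ Icc x t, y s ≤ C * (z t * log (z t)) := by
      intro s hs
      have hsI : s ∈ Icc a b := ⟨hx.1.trans hs.1, hs.2.trans ht.2⟩
      calc y s ≤ C * (z s * log (z s)) := by simpa only [mul_assoc] using hy s hsI
        _ ≤ C * (z t * log (z t)) := mul_le_mul_of_nonneg_left
          (mul_log_le_mul_log (hz1 s hsI) (hzmono hsI ht hs.2)) hC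
    have := integral_mul_le_integral_mul_of_le hxt (hV.of_mem_Icc hx ht)
      (hVy.of_mem_Icc hx ht) (fun s hs => hV0 s ⟨hx.1.trans hs.1, hs.2.trans ht.2⟩) hy'
    rw [← integral_sub_integral_of_mem_Icc hVy hx ht,
      ← integral_sub_integral_of_mem_Icc hV hx ht] at this
    simp only [z, W]
    linarith
  intro t ht
  simpa [W] using log_le_mul_exp_of_forall_le_add_mul_mul_log hC (log_le_log two_pos hc)
    (continuousOn_const.add (continuousOn_primitive_Icc hVy)) (continuousOn_primitive_Icc hV)
    (monotoneOn_primitive_of_nonneg hV hV0) hz1 (by simp) hstep t ht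

theorem log_gronwall_general (C A T : ℝ) (hC : 0 < C) :
    ∃ M : ℝ, ∀ (y V : ℝ → ℝ),
      ContinuousOn y (Set.Icc 0 T) → (∀ t ∈ Set.Icc (0:ℝ) T, 0 ≤ y t) →
      (∀ t ∈ Set.Icc (0:ℝ) T, 0 ≤ V t) →
      IntervalIntegrable V volume 0 T →
      IntervalIntegrable (fun s => V s * y s) volume 0 T →
      (∫ t in (0:ℝ)..T, V t) ≤ A →
      (∀ t ∈ Set.Icc (0:ℝ) T,
        y t ≤ C * (2 + ∫ s in (0:ℝ)..t, V s * y s)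
                * Real.log (2 + ∫ s in (0:ℝ)..t, V s * y s)) →
      ∀ t ∈ Set.Icc (0:ℝ) T, y t ≤ M := by
  set Ψ := log 2 * exp (4 * C * A)
  refine ⟨C * (exp Ψ * Ψ), fun y V _ hy0 hV0 hV hVy hVA hy t ht => ?_⟩
  set z := 2 + ∫ s in (0:ℝ)..t, V s * y s
  have hz1 : 1 ≤ z := by
    have : 0 ≤ ∫ s in (0:ℝ)..t, V s * y s := integral_nonneg ht.1 fun s hs =>
      mul_nonneg (hV0 s ⟨hs.1, hs.2.trans ht.2⟩) (hy0 s ⟨hs.1, hs.2.trans ht.2⟩)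
    linarith
  have hVA' : ∫ s in (0:ℝ)..t, V s ≤ A := (monotoneOn_primitive_of_nonneg hV hV0 ht
    (right_mem_Icc.2 (ht.1.trans ht.2)) ht.2).trans hVA
  have hzΨ : log z ≤ Ψ :=
    (log_add_primitive_le_log_mul_exp le_rfl hC.le hy0 hV0 hV hVy hy t ht).trans <|
      mul_le_mul_of_nonneg_left (exp_le_exp.2 (by gcongr)) (log_pos one_lt_two).le
  calc y t ≤ C * (z * log z) := by simpa only [mul_assoc] using hy t ht
    _ ≤ C * (exp Ψ * log (exp Ψ)) := mul_le_mul_of_nonneg_left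
        (mul_log_le_mul_log hz1 ((log_le_iff_le_exp (by linarith)).1 hzΨ)) hC.le
    _ = C * (exp Ψ * Ψ) := by rw [log_exp]

/-- Logarithmic Grönwall inequality: if `y(t) ≤ C (2 + ∫_0^t V y) ln(2 + ∫_0^t V y)`
with `∫_0^T V ≤ A`, then `y` is bounded by a constant depending only on `C, A, T`. -/
theorem log_gronwall (C A T : ℝ) (hC : 0 < C) (hT : 0 < T) :
    ∃ M : ℝ, ∀ (y V : ℝ → ℝ),
      ContinuousOn y (Set.Icc 0 T) → (∀ t ∈ Set.Icc (0:ℝ) T, 0 ≤ y t) →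
      (∀ t ∈ Set.Icc (0:ℝ) T, 0 ≤ V t) →
      IntervalIntegrable V volume 0 T →
      IntervalIntegrable (fun s => V s * y s) volume 0 T →
      (∫ t in (0:ℝ)..T, V t) ≤ A →
      (∀ t ∈ Set.Icc (0:ℝ) T,
        y t ≤ C * (2 + ∫ s in (0:ℝ)..t, V s * y s)
                * Real.log (2 + ∫ s in (0:ℝ)..t, V s * y s)) →
      ∀ t ∈ Set.Icc (0:ℝ) T, y t ≤ M :=
  log_gronwall_general C A T hC
end
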